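/- Let g be a finite-dimensional Lie algebra over a field k of characteristic zero, A a commutative associative unital k-algebra, and Γ a finite group acting on g and A. If the fixed-point subalgebra g^Γ satisfies [g^Γ, g] = g, then the equivariant map Lie algebra M = (g ⊗ A)^Γ is perfect, i.e. [M, M] = M. -/

import Mathlib

/-!
Averaging over `Γ` (possible since `|Γ|` is invertible in characteristic zero) projects
`g ⊗ A` onto `M`, and it commutes with `ad u` for every invariant `u`. The hypothesis
`[g^Γ, g] = g` gives `[x, y] ⊗ a = [x ⊗ 1, y ⊗ a]` with `x ⊗ 1 ∈ M`, so `g ⊗ A` is spanned by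
brackets `[u, v]` with `u ∈ M`; averaging them yields `[u, avg v] ∈ [M, M]`, and every `m ∈ M`
is its own average.
-/

open TensorProduct

namespace Representation

section LieAutomorphisms

variable {k Γ L : Type*} [CommRing k] [Group Γ] [LieRing L] [LieAlgebra k L]
  {ρ : Representation k Γ L}

theorem lie_mem_invariants (hρ : ∀ γ x y, ρ γ ⁅x, y⁆ = ⁅ρ γ x, ρ γ y⁆) {u v : L}
    (hu : u ∈ ρ.invariants) (hv : v ∈ ρ.invariants) : ⁅u, v⁆ ∈ ρ.invariants := fun γ => by
  rw [hρ, hu γ, hv γ]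

variable [Fintype Γ] [Invertible (Fintype.card Γ : k)]

theorem averageMap_lie_of_mem_invariants (hρ : ∀ γ x y, ρ γ ⁅x, y⁆ = ⁅ρ γ x, ρ γ y⁆) {u : L}
    (hu : u ∈ ρ.invariants) (v : L) : ρ.averageMap ⁅u, v⁆ = ⁅u, ρ.averageMap v⁆ := by
  simp only [averageMap, GroupAlgebra.average, map_smul, map_sum, asAlgebraHom_of,
    LinearMap.smul_apply, LinearMap.coe_sum, Finset.sum_apply, hρ, hu _, lie_smul, lie_sum]

theorem span_lie_invariants_eq_invariants (hρ : ∀ γ x y, ρ γ ⁅x, y⁆ = ⁅ρ γ x, ρ γ y⁆)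
    (hspan : Submodule.span k {z : L | ∃ u ∈ ρ.invariants, ∃ v, z = ⁅u, v⁆} = ⊤) :
    Submodule.span k {z : L | ∃ u ∈ ρ.invariants, ∃ v ∈ ρ.invariants, z = ⁅u, v⁆} =
      ρ.invariants := by
  refine le_antisymm ?_ fun m hm => ?_
  · rw [Submodule.span_le]
    rintro _ ⟨u, hu, v, hv, rfl⟩
    exact lie_mem_invariants hρ hu hv
  · have hmap : Submodule.span k {z : L | ∃ u ∈ ρ.invariants, ∃ v, z = ⁅u, v⁆} ≤
        (Submodule.span k {z : L | ∃ u ∈ ρ.invariants, ∃ v ∈ ρ.invariants, z = ⁅u, v⁆}).comap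
          ρ.averageMap := by
      rw [Submodule.span_le]
      rintro _ ⟨u, hu, v, rfl⟩
      rw [SetLike.mem_coe, Submodule.mem_comap, averageMap_lie_of_mem_invariants hρ hu]
      exact Submodule.subset_span ⟨u, hu, _, ρ.averageMap_invariant v, rfl⟩
    rw [← ρ.averageMap_id m hm]
    exact hmap (hspan ▸ Submodule.mem_top)

end LieAutomorphisms

end Representation

section EquivariantMapAlgebra

variable {k A g Γ : Type*} [CommRing k] [CommRing A] [Algebra k A] [LieRing g] [LieAlgebra k g]
  [Group Γ] (ψ : Γ →* (A ≃ₐ[k] A)) (φ : Γ →* (g ≃ₗ[k] g))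

noncomputable def diagonalRep : Representation k Γ (A ⊗[k] g) :=
  Representation.tprod ((AlgEquiv.toLinearMapHom k A).comp ψ)
    ((LinearEquiv.automorphismGroup.toLinearMapMonoidHom).comp φ)

theorem diagonalRep_tmul (γ : Γ) (a : A) (x : g) :
    diagonalRep ψ φ γ (a ⊗ₜ x) = ψ γ a ⊗ₜ φ γ x :=
  rfl

theorem diagonalRep_lie (hφ : ∀ γ x y, φ γ ⁅x, y⁆ = ⁅φ γ x, φ γ y⁆) (γ : Γ) (u v : A ⊗[k] g) :
    diagonalRep ψ φ γ ⁅u, v⁆ = ⁅diagonalRep ψ φ γ u, diagonalRep ψ φ γ v⁆ := by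
  induction u using TensorProduct.induction_on with
  | zero => simp
  | add u₁ u₂ h₁ h₂ => simp only [add_lie, map_add, h₁, h₂]
  | tmul a x =>
    induction v using TensorProduct.induction_on with
    | zero => simp
    | add v₁ v₂ h₁ h₂ => simp only [lie_add, map_add, h₁, h₂]
    | tmul b y =>
      simp only [LieAlgebra.ExtendScalars.bracket_tmul, diagonalRep_tmul, map_mul, hφ]

theorem one_tmul_mem_invariants_diagonalRep {x : g} (hx : ∀ γ, φ γ x = x) :
    (1 : A) ⊗ₜ x ∈ (diagonalRep ψ φ).invariants := fun γ => by
  rw [diagonalRep_tmul, map_one, hx]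

theorem span_lie_invariants_diagonalRep_eq_top
    (hgen : Submodule.span k {z : g | ∃ a b : g, (∀ γ, φ γ a = a) ∧ z = ⁅a, b⁆} = ⊤) :
    Submodule.span k
      {z : A ⊗[k] g | ∃ u ∈ (diagonalRep ψ φ).invariants, ∃ v, z = ⁅u, v⁆} = ⊤ := by
  set S := Submodule.span k {z : A ⊗[k] g | ∃ u ∈ (diagonalRep ψ φ).invariants, ∃ v, z = ⁅u, v⁆}
  have htmul (c : A) : Submodule.span k {z : g | ∃ a b : g, (∀ γ, φ γ a = a) ∧ z = ⁅a, b⁆} ≤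
      S.comap (TensorProduct.mk k A g c) := by
    rw [Submodule.span_le]
    rintro _ ⟨a, b, ha, rfl⟩
    refine Submodule.subset_span ⟨1 ⊗ₜ a, one_tmul_mem_invariants_diagonalRep ψ φ ha, c ⊗ₜ b, ?_⟩
    rw [TensorProduct.mk_apply, LieAlgebra.ExtendScalars.bracket_tmul, one_mul]
  rw [eq_top_iff, ← TensorProduct.span_tmul_eq_top, Submodule.span_le]
  rintro _ ⟨c, x, rfl⟩
  exact htmul c (hgen ▸ Submodule.mem_top)

end EquivariantMapAlgebra

theorem stmt10_general (k : Type*) [Field k] [CharZero k]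
    (A : Type*) [CommRing A] [Algebra k A]
    (g : Type*) [LieRing g] [LieAlgebra k g]
    (Γ : Type*) [Group Γ] [Fintype Γ]
    (φ : Γ →* (g ≃ₗ[k] g)) (hφ : ∀ (γ : Γ) (x y : g), φ γ ⁅x, y⁆ = ⁅φ γ x, φ γ y⁆)
    (ψ : Γ →* (A ≃ₐ[k] A))
    (d : Γ → (A ⊗[k] g) ≃ₗ[k] (A ⊗[k] g))
    (hd : ∀ (γ : Γ) (a : A) (x : g), d γ (a ⊗ₜ[k] x) = (ψ γ a) ⊗ₜ[k] (φ γ x))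
    (Mfix : Submodule k (A ⊗[k] g)) (hMfix : ∀ u, u ∈ Mfix ↔ ∀ γ : Γ, d γ u = u)
    (hgen : Submodule.span k
      {z : g | ∃ a b : g, (∀ γ : Γ, φ γ a = a) ∧ z = ⁅a, b⁆} = ⊤) :
    Submodule.span k {z : A ⊗[k] g | ∃ u ∈ Mfix, ∃ v ∈ Mfix, z = ⁅u, v⁆} = Mfix := by
  have hd_eq (γ : Γ) : (d γ : A ⊗[k] g →ₗ[k] A ⊗[k] g) = diagonalRep ψ φ γ :=
    TensorProduct.ext' (hd γ)
  have hMfix_eq : Mfix = (diagonalRep ψ φ).invariants := by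
    ext u
    simp only [hMfix, Representation.mem_invariants, ← hd_eq, LinearEquiv.coe_coe]
  have : Invertible (Fintype.card Γ : k) :=
    invertibleOfNonzero (Nat.cast_ne_zero.2 Fintype.card_ne_zero)
  subst hMfix_eq
  exact Representation.span_lie_invariants_eq_invariants (diagonalRep_lie ψ φ hφ)
    (span_lie_invariants_diagonalRep_eq_top ψ φ hgen)

/-- If `g` is a finite-dimensional Lie algebra over a field `k` of
characteristic zero, `A` a commutative associative unital `k`-algebra, `Γ` a finite group
acting on `g` and `A`, and `[g^Γ, g] = g`, then the equivariant map Lie algebra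
`M = (g ⊗ A)^Γ` is perfect, i.e. `[M, M] = M`.  (Here `g ⊗ A` is realized as `A ⊗[k] g`
with bracket `⁅a ⊗ x, b ⊗ y⁆ = (a b) ⊗ ⁅x, y⁆`.) -/
theorem stmt10 (k : Type*) [Field k] [CharZero k]
    (A : Type*) [CommRing A] [Algebra k A]
    (g : Type*) [LieRing g] [LieAlgebra k g] [FiniteDimensional k g]
    (Γ : Type*) [Group Γ] [Fintype Γ]
    (φ : Γ →* (g ≃ₗ[k] g)) (hφ : ∀ (γ : Γ) (x y : g), φ γ ⁅x, y⁆ = ⁅φ γ x, φ γ y⁆)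
    (ψ : Γ →* (A ≃ₐ[k] A))
    (d : Γ → (A ⊗[k] g) ≃ₗ[k] (A ⊗[k] g))
    (hd : ∀ (γ : Γ) (a : A) (x : g), d γ (a ⊗ₜ[k] x) = (ψ γ a) ⊗ₜ[k] (φ γ x))
    (Mfix : Submodule k (A ⊗[k] g)) (hMfix : ∀ u, u ∈ Mfix ↔ ∀ γ : Γ, d γ u = u)
    (hgen : Submodule.span k
      {z : g | ∃ a b : g, (∀ γ : Γ, φ γ a = a) ∧ z = ⁅a, b⁆} = ⊤) :
    Submodule.span k {z : A ⊗[k] g | ∃ u ∈ Mfix, ∃ v ∈ Mfix, z = ⁅u, v⁆} = Mfix :=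
  stmt10_general k A g Γ φ hφ ψ d hd Mfix hMfix hgen
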